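/- Fix L > 0 and 0 < s < t. For each ν > 0 let μ_ν be the Borel probability measure on ℝ whose density with respect to Lebesgue measure is proportional to cosh( L·a/(2νs) )·exp( −t·a²/(4νs(t−s)) ). Then, as ν → 0⁺, the measures μ_ν converge weakly to the two-atom measure ½·δ_{a₊} + ½·δ_{a₋}, where a_± = ±L·(1 − s/t). In particular, the backward stochastic Lagrangian trajectories of the Khokhlov solution started exactly at the shock remain random in the zero-viscosity limit, jumping left or right of the shock with equal probabilities (spontaneous stochasticity). -/

import Mathlib

/-!
With `b = t / (4νs(t - s))` and `c = L(1 - s/t)`, completing the square turns the density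
`cosh(2bca)·exp(-ba²)` into `exp(bc²)/2 · (exp(-b(a - c)²) + exp(-b(a + c)²))`: an equal-weight
mixture of two Gaussians centred at `±c` whose width `1/√b` tends to `0` as `ν → 0⁺`. After the
substitution `a = c + y/√b`, dominated convergence shows that `√b` times the Gaussian integral of a
bounded continuous `f` tends to `√π·f(c)`; the diverging factor `exp(bc²)/2` cancels in the ratio.
-/

open MeasureTheory Filter Topology Real

theorem cosh_mul_mul_exp_neg_mul_sq (b c a : ℝ) :
    cosh (2 * b * c * a) * exp (-b * a ^ 2)
      = exp (b * c ^ 2) / 2 * (exp (-b * (a - c) ^ 2) + exp (-b * (a + c) ^ 2)) := by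
  rw [cosh_eq, div_mul_eq_mul_div, add_mul, ← exp_add, ← exp_add, div_mul_eq_mul_div,
    mul_add, ← exp_add, ← exp_add]
  congr 3 <;> ring

theorem sqrt_mul_integral_mul_exp_neg_mul_sq_sub (g : ℝ → ℝ) (c : ℝ) {b : ℝ} (hb : 0 < b) :
    √b * ∫ a, g a * exp (-b * (a - c) ^ 2) = ∫ y, g (c + y / √b) * exp (-y ^ 2) := by
  have hb' : 0 < √b := sqrt_pos.mpr hb
  have hscale : ∀ y, -b * (y / √b) ^ 2 = -y ^ 2 := fun y => by
    rw [div_pow, sq_sqrt hb.le]; field_simp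
  rw [← integral_sub_right_eq_self (fun a => g a * exp (-b * (a - c) ^ 2)) (-c)]
  simp only [sub_neg_eq_add, add_sub_cancel_right]
  have hdiv := Measure.integral_comp_div (fun x => g (x + c) * exp (-b * x ^ 2)) √b
  rw [abs_of_pos hb', smul_eq_mul] at hdiv
  rw [← hdiv]
  simp only [hscale, add_comm]

theorem integrable_mul_exp_neg_mul_sq_sub {f : ℝ → ℝ} (hf : AEStronglyMeasurable f)
    {M : ℝ} (hM : ∀ x, |f x| ≤ M) (c : ℝ) {b : ℝ} (hb : 0 < b) :
    Integrable fun a => f a * exp (-b * (a - c) ^ 2) :=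
  ((integrable_exp_neg_mul_sq hb).comp_sub_right c).bdd_mul hf
    (Eventually.of_forall fun x => by simpa using hM x)

theorem tendsto_integral_comp_add_div_mul_exp_neg_sq {f : ℝ → ℝ} (hf : Continuous f)
    {M : ℝ} (hM : ∀ x, |f x| ≤ M) (c : ℝ) {ι : Type*} {l : Filter ι}
    [l.IsCountablyGenerated] {τ : ι → ℝ} (hτ : Tendsto τ l atTop) :
    Tendsto (fun i => ∫ y, f (c + y / τ i) * exp (-y ^ 2)) l (𝓝 (√π * f c)) := by
  have hgauss : ∫ y : ℝ, f c * exp (-y ^ 2) = √π * f c := by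
    rw [integral_const_mul, mul_comm]
    simpa using congrArg (f c * ·) (integral_gaussian 1)
  rw [← hgauss]
  refine tendsto_integral_filter_of_dominated_convergence (fun y => M * exp (-y ^ 2))
    (Eventually.of_forall fun i => by fun_prop)
    (Eventually.of_forall fun i => Eventually.of_forall fun y => ?_)
    ((integrable_exp_neg_mul_sq one_pos).const_mul M |>.congr (by simp))
    (Eventually.of_forall fun y => ?_)
  · rw [norm_mul, norm_of_nonneg (exp_pos _).le]
    exact mul_le_mul_of_nonneg_right (hM _) (exp_pos _).le
  · have : Tendsto (fun i => c + y / τ i) l (𝓝 c) := by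
      simpa using tendsto_const_nhds.add (tendsto_const_nhds.div_atTop hτ)
    exact ((hf.tendsto c).comp this).mul_const _

theorem tendsto_sqrt_mul_integral_mul_exp_neg_mul_sq_sub {f : ℝ → ℝ} (hf : Continuous f)
    {M : ℝ} (hM : ∀ x, |f x| ≤ M) (c : ℝ) :
    Tendsto (fun b => √b * ∫ a, f a * exp (-b * (a - c) ^ 2)) atTop (𝓝 (√π * f c)) :=
  (tendsto_integral_comp_add_div_mul_exp_neg_sq hf hM c tendsto_sqrt_atTop).congr'
    (eventually_gt_atTop 0 |>.mono fun _ hb =>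
      (sqrt_mul_integral_mul_exp_neg_mul_sq_sub f c hb).symm)

theorem integral_mul_cosh_mul_exp_neg_mul_sq {f : ℝ → ℝ} (hf : AEStronglyMeasurable f)
    {M : ℝ} (hM : ∀ x, |f x| ≤ M) (c : ℝ) {b : ℝ} (hb : 0 < b) :
    ∫ a, f a * (cosh (2 * b * c * a) * exp (-b * a ^ 2))
      = exp (b * c ^ 2) / 2 *
          ((∫ a, f a * exp (-b * (a - c) ^ 2)) + ∫ a, f a * exp (-b * (a - -c) ^ 2)) := by
  have hsplit : ∀ a, f a * (cosh (2 * b * c * a) * exp (-b * a ^ 2))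
      = exp (b * c ^ 2) / 2 *
          (f a * exp (-b * (a - c) ^ 2) + f a * exp (-b * (a - -c) ^ 2)) := fun a => by
    rw [cosh_mul_mul_exp_neg_mul_sq, sub_neg_eq_add]; ring
  simp_rw [hsplit]
  rw [integral_const_mul, integral_add (integrable_mul_exp_neg_mul_sq_sub hf hM c hb)
    (integrable_mul_exp_neg_mul_sq_sub hf hM (-c) hb)]

theorem tendsto_integral_mul_cosh_div_integral_cosh {f : ℝ → ℝ} (hf : Continuous f)
    {M : ℝ} (hM : ∀ x, |f x| ≤ M) (c : ℝ) :
    Tendsto (fun b => (∫ a, f a * (cosh (2 * b * c * a) * exp (-b * a ^ 2)))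
        / ∫ a, cosh (2 * b * c * a) * exp (-b * a ^ 2))
      atTop (𝓝 ((1 / 2) * f c + (1 / 2) * f (-c))) := by
  -- the denominator is the case `f = 1`
  have hone : ∀ x : ℝ, |(fun _ => (1 : ℝ)) x| ≤ 1 := fun _ => by simp
  have hnum := (tendsto_sqrt_mul_integral_mul_exp_neg_mul_sq_sub hf hM c).add
    (tendsto_sqrt_mul_integral_mul_exp_neg_mul_sq_sub hf hM (-c))
  have hden := (tendsto_sqrt_mul_integral_mul_exp_neg_mul_sq_sub continuous_const hone c).add
    (tendsto_sqrt_mul_integral_mul_exp_neg_mul_sq_sub continuous_const hone (-c))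
  have hπ : 0 < √π := sqrt_pos.mpr pi_pos
  have hlim : (√π * f c + √π * f (-c)) / (√π * 1 + √π * 1) = 1 / 2 * f c + 1 / 2 * f (-c) := by
    field_simp; ring
  rw [← hlim]
  refine (hnum.div hden (by positivity)).congr' ?_
  filter_upwards [eventually_gt_atTop 0] with b hb
  have hden_eq := integral_mul_cosh_mul_exp_neg_mul_sq aestronglyMeasurable_const hone c hb
  simp only [one_mul] at hden_eq
  simp only [Pi.div_apply, one_mul]
  rw [integral_mul_cosh_mul_exp_neg_mul_sq hf.aestronglyMeasurable hM c hb, hden_eq,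
    ← mul_add, ← mul_add, mul_div_mul_left _ _ (sqrt_pos.mpr hb).ne',
    mul_div_mul_left _ _ (by positivity)]

theorem khokhlov_spontaneous_stochasticity_general (L s t : ℝ)
    (hs : 0 < s) (hst : s < t) :
    ∀ f : ℝ → ℝ, Continuous f → (∃ M, ∀ x, |f x| ≤ M) →
      Tendsto (fun ν : ℝ =>
          (∫ a : ℝ, f a * (Real.cosh (L * a / (2 * ν * s))
              * Real.exp (-(t * a ^ 2) / (4 * ν * s * (t - s)))))
          / ∫ a : ℝ, Real.cosh (L * a / (2 * ν * s))
              * Real.exp (-(t * a ^ 2) / (4 * ν * s * (t - s))))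
        (nhdsWithin 0 (Set.Ioi 0))
        (nhds ((1 / 2) * f (L * (1 - s / t)) + (1 / 2) * f (-(L * (1 - s / t))))) := by
  rintro f hf ⟨M, hM⟩
  have hts : 0 < t - s := sub_pos.mpr hst
  have ht : 0 < t := hs.trans hst
  set κ := t / (4 * s * (t - s))
  have hb : Tendsto (fun ν : ℝ => κ * ν⁻¹) (𝓝[>] 0) atTop :=
    tendsto_inv_nhdsGT_zero.const_mul_atTop (by positivity)
  refine ((tendsto_integral_mul_cosh_div_integral_cosh hf hM (L * (1 - s / t))).comp hb).congr' ?_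
  filter_upwards [self_mem_nhdsWithin] with ν (hν : 0 < ν)
  have hcosh : ∀ a, L * a / (2 * ν * s) = 2 * (κ * ν⁻¹) * (L * (1 - s / t)) * a := fun a => by
    simp only [κ]; field_simp; ring
  have hexp : ∀ a, -(t * a ^ 2) / (4 * ν * s * (t - s)) = -(κ * ν⁻¹) * a ^ 2 := fun a => by
    simp only [κ]; field_simp
  simp only [Function.comp_apply, hcosh, hexp]

/-- Spontaneous stochasticity for the Khokhlov solution: the backward transition
probability measures `μ_ν` with densities proportional to
`cosh(La/(2νs))·exp(−ta²/(4νs(t−s)))` converge weakly, as `ν → 0⁺`, to the two-atom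
measure `½δ_{a₊} + ½δ_{a₋}` with `a_± = ±L(1 − s/t)`: for every bounded continuous test
function `f` the normalized integrals converge to `½f(a₊) + ½f(a₋)`. -/
theorem khokhlov_spontaneous_stochasticity (L s t : ℝ)
    (hL : 0 < L) (hs : 0 < s) (hst : s < t) :
    ∀ f : ℝ → ℝ, Continuous f → (∃ M, ∀ x, |f x| ≤ M) →
      Tendsto (fun ν : ℝ =>
          (∫ a : ℝ, f a * (Real.cosh (L * a / (2 * ν * s))
              * Real.exp (-(t * a ^ 2) / (4 * ν * s * (t - s)))))
          / ∫ a : ℝ, Real.cosh (L * a / (2 * ν * s))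
              * Real.exp (-(t * a ^ 2) / (4 * ν * s * (t - s))))
        (nhdsWithin 0 (Set.Ioi 0))
        (nhds ((1 / 2) * f (L * (1 - s / t)) + (1 / 2) * f (-(L * (1 - s / t))))) :=
  khokhlov_spontaneous_stochasticity_general L s t hs hst
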